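/- arXiv:1710.04655 — 6 statements merged into one kernel-verified Lean document; each statement's English description precedes it below -/
import Mathlib

section
/- Let n ≥ 2, σ > 0, l > 0, and let f : [−l, l] → ℝ be continuously differentiable with 2·f′(t) + n·f(t)² + σ/(n−1) ≤ 0 for all t ∈ [−l, l]. Then 2l < 2π·√((n−1)/(σ·n)). -/
/-!
Put `g = (n/2) f` and `c = √(σn/(n-1)) / 2`; the Riccati inequality becomes `g' ≤ -(g² + c²)`.
Then `t ↦ arctan (g t / c) + c t` is antitone, since its derivative is `c g' / (c² + g²) + c ≤ 0`.
As `arctan` takes values in `(-π/2, π/2)`, comparing the endpoints gives `c · 2l < π`.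
-/

open Real Set

lemma arctan_riccati_deriv_nonpos {c y y' : ℝ} (hc : 0 < c) (hy' : y' ≤ -(y ^ 2 + c ^ 2)) :
    1 / (1 + (y / c) ^ 2) * (y' / c) + c ≤ 0 := by
  have hpos : 0 < c ^ 2 + y ^ 2 := by positivity
  have hrewrite : 1 / (1 + (y / c) ^ 2) * (y' / c) + c =
      c * (y' + (y ^ 2 + c ^ 2)) / (c ^ 2 + y ^ 2) := by
    field_simp
    ring
  rw [hrewrite]
  exact div_nonpos_of_nonpos_of_nonneg
    (mul_nonpos_of_nonneg_of_nonpos hc.le (by linarith)) hpos.le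

lemma antitoneOn_arctan_div_add_mul_of_riccati {g g' : ℝ → ℝ} {s : Set ℝ} {c : ℝ}
    (hs : Convex ℝ s) (hc : 0 < c) (hderiv : ∀ t ∈ s, HasDerivAt g (g' t) t)
    (hle : ∀ t ∈ s, g' t ≤ -(g t ^ 2 + c ^ 2)) :
    AntitoneOn (fun t => arctan (g t / c) + c * t) s := by
  have hF : ∀ t ∈ s, HasDerivAt (fun t => arctan (g t / c) + c * t)
      (1 / (1 + (g t / c) ^ 2) * (g' t / c) + c) t := fun t ht =>
    ((hderiv t ht).div_const c).arctan.add (by simpa using (hasDerivAt_id t).const_mul c)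
  refine antitoneOn_of_hasDerivWithinAt_nonpos hs
    (fun t ht => (hF t ht).continuousAt.continuousWithinAt)
    (fun t ht => (hF t (interior_subset ht)).hasDerivWithinAt)
    (fun t ht => arctan_riccati_deriv_nonpos hc (hle t (interior_subset ht)))

theorem mul_sub_lt_pi_of_riccati {g g' : ℝ → ℝ} {a b c : ℝ} (hc : 0 < c)
    (hderiv : ∀ t ∈ Icc a b, HasDerivAt g (g' t) t)
    (hle : ∀ t ∈ Icc a b, g' t ≤ -(g t ^ 2 + c ^ 2)) :
    c * (b - a) < π := by
  rcases lt_or_ge b a with hba | hab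
  · linarith [mul_neg_of_pos_of_neg hc (sub_neg.2 hba), pi_pos]
  have hmono := antitoneOn_arctan_div_add_mul_of_riccati (convex_Icc a b) hc hderiv hle
    (left_mem_Icc.2 hab) (right_mem_Icc.2 hab) hab
  have := arctan_lt_pi_div_two (g a / c)
  have := neg_pi_div_two_lt_arctan (g b / c)
  dsimp only at hmono
  linarith

theorem torical_band_riccati_width_general (n : ℕ) (hn : 2 ≤ n) (σ l : ℝ) (hσ : 0 < σ)
    (f f' : ℝ → ℝ)
    (hderiv : ∀ t ∈ Set.Icc (-l) l, HasDerivAt f (f' t) t)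
    (hineq : ∀ t ∈ Set.Icc (-l) l,
      2 * f' t + (n : ℝ) * (f t) ^ 2 + σ / ((n : ℝ) - 1) ≤ 0) :
    2 * l < 2 * Real.pi * Real.sqrt (((n : ℝ) - 1) / (σ * n)) := by
  have hn1 : (0 : ℝ) < n - 1 := by
    have : (2 : ℝ) ≤ n := by exact_mod_cast hn
    linarith
  set w := √(((n : ℝ) - 1) / (σ * n))
  have hw : 0 < w := sqrt_pos.2 (by positivity)
  have hw2 : w ^ 2 = (n - 1) / (σ * n) := sq_sqrt (by positivity)
  have hc2 : (2 * w)⁻¹ ^ 2 = (n : ℝ) * (σ / (n - 1)) / 4 := by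
    rw [inv_pow, mul_pow, hw2]
    field_simp
    norm_num
  have hwidth := mul_sub_lt_pi_of_riccati (g := fun t => (n : ℝ) / 2 * f t)
    (g' := fun t => (n : ℝ) / 2 * f' t) (inv_pos.2 (by positivity : (0 : ℝ) < 2 * w))
    (fun t ht => (hderiv t ht).const_mul _)
    (fun t ht => by nlinarith [hineq t ht, hc2])
  rw [inv_mul_eq_div, div_lt_iff₀ (by positivity)] at hwidth
  linarith

/-- The ODE kernel of Gromov's torical band-width inequality: a C¹ function
`f` on `[-l, l]` satisfying the Riccati inequality `2 f' + n f² + σ/(n-1) ≤ 0`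
forces `2 l < 2π √((n-1)/(σ n))`. -/
theorem torical_band_riccati_width (n : ℕ) (hn : 2 ≤ n) (σ l : ℝ) (hσ : 0 < σ)
    (hl : 0 < l) (f f' : ℝ → ℝ)
    (hderiv : ∀ t ∈ Set.Icc (-l) l, HasDerivAt f (f' t) t)
    (hcont : ContinuousOn f' (Set.Icc (-l) l))
    (hineq : ∀ t ∈ Set.Icc (-l) l,
      2 * f' t + (n : ℝ) * (f t) ^ 2 + σ / ((n : ℝ) - 1) ≤ 0) :
    2 * l < 2 * Real.pi * Real.sqrt (((n : ℝ) - 1) / (σ * n)) :=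
  torical_band_riccati_width_general n hn σ l hσ f f' hderiv hineq
end

section
/- Let n ≥ 2, l > 0, and let f₁, …, f_{n−1} : [−l, l] → ℝ be C¹ functions satisfying −2·Σᵢ fᵢ′(t) − (Σᵢ fᵢ(t))² − Σᵢ fᵢ(t)² ≥ n(n−1) for all t ∈ [−l, l]. Then 2l < 2π/n. -/
/-!
By Cauchy–Schwarz, `(Σ fᵢ)² ≤ (n - 1) Σ fᵢ²`, so the curvature bound turns into the Riccati
inequality `u' ≤ -(n/2)(1 + u²)` for `u = (Σ fᵢ) / (n - 1)`. Along such a `u` the angle `arctan u`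
decreases at rate at least `n/2`, and it only has room `π` to do so: `(n/2) · 2l < π`.
-/

open Real Set Finset

theorem mul_sub_lt_pi_of_deriv_le_neg_mul_one_add_sq {u u' : ℝ → ℝ} {a b k : ℝ} (hab : a ≤ b)
    (hu : ∀ t ∈ Icc a b, HasDerivAt u (u' t) t)
    (hric : ∀ t ∈ Icc a b, u' t ≤ -k * (1 + u t ^ 2)) :
    k * (b - a) < π := by
  set G : ℝ → ℝ := fun t => arctan (u t) + k * t
  have hG : ∀ t ∈ Icc a b, HasDerivAt G (1 / (1 + u t ^ 2) * u' t + k) t := fun t ht => by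
    simpa using (hu t ht).arctan.fun_add ((hasDerivAt_id t).const_mul k)
  have hG' : ∀ t ∈ Icc a b, 1 / (1 + u t ^ 2) * u' t + k ≤ 0 := fun t ht => by
    have hpos : 0 < 1 + u t ^ 2 := by positivity
    rw [one_div_mul_eq_div, ← le_neg_iff_add_nonpos_right, div_le_iff₀ hpos]
    linarith [hric t ht]
  have hanti : AntitoneOn G (Icc a b) :=
    antitoneOn_of_hasDerivWithinAt_nonpos (convex_Icc a b)
      (fun t ht => (hG t ht).continuousAt.continuousWithinAt)
      (fun t ht => (hG t (interior_subset ht)).hasDerivWithinAt)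
      (fun t ht => hG' t (interior_subset ht))
  have hGab : G b ≤ G a := hanti (left_mem_Icc.2 hab) (right_mem_Icc.2 hab) hab
  linarith [arctan_lt_pi_div_two (u a), neg_pi_div_two_lt_arctan (u b)]

theorem riccati_of_scalar_curvature_bound {n F F' S : ℝ} (hn : 1 < n)
    (hCS : F ^ 2 ≤ (n - 1) * S) (hsc : n * (n - 1) ≤ -2 * F' - F ^ 2 - S) :
    F' / (n - 1) ≤ -(n / 2) * (1 + (F / (n - 1)) ^ 2) := by
  have hc : 0 < n - 1 := sub_pos.2 hn
  have hS : F ^ 2 / (n - 1) ≤ S := by rw [div_le_iff₀ hc]; linarith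
  have hexpand : -(n / 2) * (1 + (F / (n - 1)) ^ 2) * (n - 1)
      = -(n / 2) * (n - 1) - (F ^ 2 + F ^ 2 / (n - 1)) / 2 := by
    field_simp
    ring
  rw [div_le_iff₀ hc, hexpand]
  linarith

theorem torus_invariant_band_width_general (n : ℕ) (hn : 2 ≤ n) (l : ℝ) (hl : 0 < l)
    (f f' : Fin (n - 1) → ℝ → ℝ)
    (hderiv : ∀ i, ∀ t ∈ Set.Icc (-l) l, HasDerivAt (f i) (f' i t) t)
    (hsc : ∀ t ∈ Set.Icc (-l) l,
      (n : ℝ) * ((n : ℝ) - 1) ≤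
        -2 * ∑ i, f' i t - (∑ i, f i t) ^ 2 - ∑ i, (f i t) ^ 2) :
    2 * l < 2 * Real.pi / n := by
  have hn' : (1 : ℝ) < n := by exact_mod_cast hn
  have hcard : ((univ : Finset (Fin (n - 1))).card : ℝ) = n - 1 := by
    simp [Nat.cast_sub (one_le_two.trans hn)]
  have hwidth := mul_sub_lt_pi_of_deriv_le_neg_mul_one_add_sq (by linarith)
    (u := fun t => (∑ i, f i t) / (n - 1)) (u' := fun t => (∑ i, f' i t) / (n - 1))
    (k := n / 2)
    (fun t ht => (HasDerivAt.fun_sum fun i _ => hderiv i t ht).div_const _)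
    (fun t ht => riccati_of_scalar_curvature_bound hn'
      (hcard ▸ sq_sum_le_card_mul_sum_sq) (hsc t ht))
  rw [lt_div_iff₀ (by positivity)]
  linarith

/-- Width bound for 𝕋ⁿ⁻¹-invariant metrics on torical bands: if the logarithmic
derivatives fᵢ satisfy the scalar curvature inequality
`-2 Σ fᵢ' - (Σ fᵢ)² - Σ fᵢ² ≥ n(n-1)` on `[-l, l]`, then `2l < 2π/n`. -/
theorem torus_invariant_band_width (n : ℕ) (hn : 2 ≤ n) (l : ℝ) (hl : 0 < l)
    (f f' : Fin (n - 1) → ℝ → ℝ)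
    (hderiv : ∀ i, ∀ t ∈ Set.Icc (-l) l, HasDerivAt (f i) (f' i t) t)
    (hcont : ∀ i, ContinuousOn (f' i) (Set.Icc (-l) l))
    (hsc : ∀ t ∈ Set.Icc (-l) l,
      (n : ℝ) * ((n : ℝ) - 1) ≤
        -2 * ∑ i, f' i t - (∑ i, f i t) ^ 2 - ∑ i, (f i t) ^ 2) :
    2 * l < 2 * Real.pi / n :=
  torus_invariant_band_width_general n hn l hl f f' hderiv hsc
end

section
/- Let n ≥ 1 and l > 0. There is no C¹ function f : [−l, l] → ℝ with f(−l) < 1, f(l) > 1, and 2·f′(t) < n·(1 − f(t)²) for all t ∈ [−l, l]. -/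
/-- Barrier lemma for band rigidity: no C¹ function on `[-l, l]` can have
`f(-l) < 1`, `f(l) > 1`, and `2 f' < n (1 - f²)` throughout. -/
theorem no_crossing_riccati_barrier (n : ℕ) (hn : 1 ≤ n) (l : ℝ) (hl : 0 < l)
    (f f' : ℝ → ℝ)
    (hderiv : ∀ t ∈ Set.Icc (-l) l, HasDerivAt f (f' t) t)
    (hleft : f (-l) < 1) (hright : 1 < f l)
    (hineq : ∀ t ∈ Set.Icc (-l) l, 2 * f' t < (n : ℝ) * (1 - (f t) ^ 2)) :
    False := by
  have hcont : ContinuousOn f (Set.Icc (-l) l) := fun t ht =>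
    (hderiv t ht).continuousAt.continuousWithinAt
  set S : Set ℝ := {t ∈ Set.Icc (-l) l | 1 ≤ f t} with hS
  have hlmem : l ∈ Set.Icc (-l) l := by constructor <;> linarith
  have hne : S.Nonempty := ⟨l, hlmem, le_of_lt hright⟩
  have hbdd : BddBelow S := ⟨-l, fun t ht => ht.1.1⟩
  have hclosed : IsClosed S := by
    have : S = Set.Icc (-l) l ∩ f ⁻¹' Set.Ici 1 := by
      ext t; simp [hS, Set.mem_inter_iff, and_comm]
    rw [this]
    exact ContinuousOn.preimage_isClosed_of_isClosed hcont isClosed_Icc isClosed_Ici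
  set t₀ := sInf S with ht₀
  have ht₀S : t₀ ∈ S := hclosed.csInf_mem hne hbdd
  obtain ⟨ht₀I, hft₀⟩ := ht₀S
  have ht₀gt : -l < t₀ := by
    rcases lt_or_eq_of_le ht₀I.1 with h | h
    · exact h
    · exfalso; rw [← h] at hft₀; linarith
  -- f' t₀ < 0
  have hf'neg : f' t₀ < 0 := by
    have h1 := hineq t₀ ht₀I
    have hsq : (1 : ℝ) ≤ (f t₀) ^ 2 := one_le_pow_iff_of_nonneg (by linarith) (by norm_num) |>.mpr hft₀
    nlinarith [(Nat.one_le_cast.mpr hn : (1:ℝ) ≤ n)]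
  -- slope argument
  have hslope : Filter.Tendsto (slope f t₀) (nhdsWithin t₀ {t₀}ᶜ) (nhds (f' t₀)) :=
    hasDerivAt_iff_tendsto_slope.mp (hderiv t₀ ht₀I)
  have hmono : nhdsWithin t₀ (Set.Iio t₀) ≤ nhdsWithin t₀ {t₀}ᶜ :=
    nhdsWithin_mono _ (fun x hx => ne_of_lt hx)
  have hev1 : ∀ᶠ t in nhdsWithin t₀ (Set.Iio t₀), slope f t₀ t < 0 :=
    (hslope.mono_left hmono).eventually (Filter.Tendsto.eventually_lt_const hf'neg Filter.tendsto_id)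
  have hev2 : ∀ᶠ t in nhdsWithin t₀ (Set.Iio t₀), t ∈ Set.Ioo (-l) t₀ :=
    Ioo_mem_nhdsLT_of_mem ⟨ht₀gt, le_refl t₀⟩
  obtain ⟨t, hts, htI⟩ := (hev1.and hev2).exists
  have htlt : t < t₀ := htI.2
  have htIcc : t ∈ Set.Icc (-l) l := ⟨le_of_lt htI.1, le_trans (le_of_lt htlt) ht₀I.2⟩
  -- slope f t₀ t = (f t - f t₀)/(t - t₀) < 0, t - t₀ < 0 ⇒ f t > f t₀ ≥ 1
  have hft : 1 < f t := by
    have hd : t - t₀ < 0 := by linarith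
    have := hts
    rw [slope_def_field] at this
    rcases div_neg_iff.mp this with ⟨h1, _⟩ | ⟨_, h2⟩
    · linarith
    · linarith
  -- but t < t₀ = sInf S and t ∈ S : contradiction
  have : t₀ ≤ t := csInf_le hbdd ⟨htIcc, le_of_lt hft⟩
  linarith
end

section
/- Let n ≥ 2, σ₀ > 0, 0 < δ₀ ≤ l, and 0 ≤ ε ≤ n·σ₀²·δ₀²/(8(n−1)). Suppose σ : [−l, l] → ℝ is continuous with σ(t) ≥ σ₀ for |t| ≤ δ₀ and σ(t) ≥ −ε for all t, and f : [−l, l] → ℝ is C¹ with 2·f′(t) + n·f(t)² + σ(t)/(n−1) ≤ 0 for all t. Then l ≤ δ₀ + 8(n−1)/(n·σ₀·δ₀). -/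
/-!
On `[-δ₀, δ₀]` the inequality gives `f' ≤ -σ₀ / (2 (n - 1))`, so `f` drops by at least `2c`,
`c = σ₀ δ₀ / (2 (n - 1))`, and hence `f δ₀ ≤ -c` or `f (-δ₀) ≥ c`. Globally `f` is a subsolution of
the Riccati equation `f' = -(n/2) f² + (n/4) c²`, the constant absorbing the `-ε` error. The level
`-c` is a barrier, and below it `f' ≤ -(n/4) f²`, so `1 / f` increases at rate `n / 4`: starting
from `1 / f ≥ -1 / c` it reaches `0` within time `4 / (n c)`. The case `f (-δ₀) ≥ c` is the mirror
image under `t ↦ -f (-t)`.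
-/

open Set

theorem image_sub_le_mul_sub_of_hasDerivAt_le {f f' : ℝ → ℝ} {a b C : ℝ} (hab : a ≤ b)
    (hf : ∀ t ∈ Icc a b, HasDerivAt f (f' t) t) (hf' : ∀ t ∈ Icc a b, f' t ≤ C) :
    f b - f a ≤ C * (b - a) := by
  refine (convex_Icc a b).image_sub_le_mul_sub_of_deriv_le
    (fun t ht => (hf t ht).continuousAt.continuousWithinAt) (fun t ht => ?_) (fun t ht => ?_)
    a (left_mem_Icc.2 hab) b (right_mem_Icc.2 hab) hab
  all_goals rw [interior_Icc] at ht
  · exact (hf t (Ioo_subset_Icc_self ht)).differentiableAt.differentiableWithinAt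
  · rw [(hf t (Ioo_subset_Icc_self ht)).deriv]
    exact hf' t (Ioo_subset_Icc_self ht)

theorem mul_sub_lt_neg_inv_of_hasDerivAt_le_neg_mul_sq {f f' : ℝ → ℝ} {a b k : ℝ} (hab : a ≤ b)
    (hf : ∀ t ∈ Icc a b, HasDerivAt f (f' t) t) (hneg : ∀ t ∈ Icc a b, f t < 0)
    (hf' : ∀ t ∈ Icc a b, f' t ≤ -k * f t ^ 2) :
    k * (b - a) < -(f a)⁻¹ := by
  have hinv : ∀ t ∈ Icc a b, HasDerivAt (fun s => -(f s)⁻¹) (f' t / f t ^ 2) t := fun t ht => by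
    have := ((hf t ht).inv (hneg t ht).ne).neg
    rw [neg_div, neg_neg] at this
    exact this
  have hslope : ∀ t ∈ Icc a b, f' t / f t ^ 2 ≤ -k := fun t ht => by
    rw [div_le_iff₀ (sq_pos_of_neg (hneg t ht))]
    linarith [hf' t ht]
  have hb : (f b)⁻¹ < 0 := inv_lt_zero.2 (hneg b (right_mem_Icc.2 hab))
  linarith [image_sub_le_mul_sub_of_hasDerivAt_le hab hinv hslope]

theorem le_neg_of_hasDerivAt_le_neg_mul_sq_add {f f' : ℝ → ℝ} {a b k m c : ℝ}
    (hm : m < k * c ^ 2) (hf : ∀ t ∈ Icc a b, HasDerivAt f (f' t) t)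
    (hf' : ∀ t ∈ Icc a b, f' t ≤ -k * f t ^ 2 + m) (ha : f a ≤ -c) :
    ∀ t ∈ Icc a b, f t ≤ -c :=
  fun _ ht => image_le_of_deriv_right_lt_deriv_boundary
    (fun t ht => (hf t ht).continuousAt.continuousWithinAt)
    (fun t ht => (hf t (Ico_subset_Icc_self ht)).hasDerivWithinAt) ha
    (fun _ => hasDerivAt_const _ (-c))
    (fun t ht hfc => by
      have := hf' t (Ico_subset_Icc_self ht)
      rw [hfc, neg_sq] at this
      linarith)
    ht

theorem sub_lt_of_hasDerivAt_le_neg_mul_sq_add_of_left_le_neg {f f' : ℝ → ℝ} {a b k m c : ℝ}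
    (hc : 0 < c) (hm₀ : 0 ≤ m) (hm : m < k * c ^ 2) (hab : a ≤ b)
    (hf : ∀ t ∈ Icc a b, HasDerivAt f (f' t) t)
    (hf' : ∀ t ∈ Icc a b, f' t ≤ -k * f t ^ 2 + m) (ha : f a ≤ -c) :
    b - a < c / (k * c ^ 2 - m) := by
  have hbarrier := le_neg_of_hasDerivAt_le_neg_mul_sq_add hm hf hf' ha
  set k' := (k * c ^ 2 - m) / c ^ 2
  -- below the barrier `f ^ 2 ≥ c ^ 2`, so the constant `m` is absorbed into the quadratic term
  have hquad : ∀ t ∈ Icc a b, f' t ≤ -k' * f t ^ 2 := fun t ht => by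
    have hsq : c ^ 2 ≤ f t ^ 2 := by nlinarith [hbarrier t ht]
    have : m ≤ m / c ^ 2 * f t ^ 2 := by
      rw [div_mul_eq_mul_div, le_div_iff₀ (by positivity)]
      exact mul_le_mul_of_nonneg_left hsq hm₀
    calc f' t ≤ -k * f t ^ 2 + m := hf' t ht
      _ ≤ -k * f t ^ 2 + m / c ^ 2 * f t ^ 2 := by linarith
      _ = -k' * f t ^ 2 := by simp only [k']; field_simp; ring
  have hlen := mul_sub_lt_neg_inv_of_hasDerivAt_le_neg_mul_sq hab hf
    (fun t ht => (hbarrier t ht).trans_lt (neg_lt_zero.2 hc)) hquad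
  have hinv : -(f a)⁻¹ ≤ c⁻¹ := by
    rw [← inv_neg]
    exact inv_anti₀ hc (le_neg.1 ha)
  have hk' : 0 < k' := div_pos (sub_pos.2 hm) (by positivity)
  calc b - a < c⁻¹ / k' := by rw [lt_div_iff₀ hk']; linarith
    _ = c / (k * c ^ 2 - m) := by simp only [k']; field_simp

theorem sub_lt_of_hasDerivAt_le_neg_mul_sq_add_of_le_right {f f' : ℝ → ℝ} {a b k m c : ℝ}
    (hc : 0 < c) (hm₀ : 0 ≤ m) (hm : m < k * c ^ 2) (hab : a ≤ b)
    (hf : ∀ t ∈ Icc a b, HasDerivAt f (f' t) t)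
    (hf' : ∀ t ∈ Icc a b, f' t ≤ -k * f t ^ 2 + m) (hb : c ≤ f b) :
    b - a < c / (k * c ^ 2 - m) := by
  have hmem : ∀ t ∈ Icc (-b) (-a), -t ∈ Icc a b := fun t ht => by
    rwa [← neg_mem_Icc_iff] at ht
  have := sub_lt_of_hasDerivAt_le_neg_mul_sq_add_of_left_le_neg (f := fun t => -f (-t))
    (f' := fun t => f' (-t)) hc hm₀ hm (neg_le_neg hab)
    (fun t ht => by
      have := ((hf _ (hmem t ht)).comp t (hasDerivAt_neg t)).neg
      rwa [mul_neg_one, neg_neg] at this)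
    (fun t ht => by simpa only [neg_sq] using hf' _ (hmem t ht)) (by simpa using hb)
  linarith

theorem sub_lt_of_hasDerivAt_le_neg_mul_sq_add_of_sub_le {f f' : ℝ → ℝ} {a b k m c : ℝ}
    (hc : 0 < c) (hm₀ : 0 ≤ m) (hm : m < k * c ^ 2) (ha : 0 ≤ a) (hab : a ≤ b)
    (hf : ∀ t ∈ Icc (-b) b, HasDerivAt f (f' t) t)
    (hf' : ∀ t ∈ Icc (-b) b, f' t ≤ -k * f t ^ 2 + m) (hdrop : f a - f (-a) ≤ -2 * c) :
    b - a < c / (k * c ^ 2 - m) := by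
  have hright : Icc a b ⊆ Icc (-b) b := Icc_subset_Icc (by linarith) le_rfl
  have hleft : Icc (-b) (-a) ⊆ Icc (-b) b := Icc_subset_Icc le_rfl (by linarith)
  rcases le_or_gt (f a) (-c) with hfa | hfa
  · exact sub_lt_of_hasDerivAt_le_neg_mul_sq_add_of_left_le_neg hc hm₀ hm hab
      (fun t ht => hf t (hright ht)) (fun t ht => hf' t (hright ht)) hfa
  · have := sub_lt_of_hasDerivAt_le_neg_mul_sq_add_of_le_right hc hm₀ hm (neg_le_neg hab)
      (fun t ht => hf t (hleft ht)) (fun t ht => hf' t (hleft ht)) (by linarith)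
    linarith

theorem symmetrization_corollary_ode_general (n : ℕ) (hn : 2 ≤ n) (σ₀ δ₀ l ε : ℝ)
    (hσ₀ : 0 < σ₀) (hδ₀ : 0 < δ₀) (hδl : δ₀ ≤ l)
    (hε : ε ≤ (n : ℝ) * σ₀ ^ 2 * δ₀ ^ 2 / (8 * ((n : ℝ) - 1)))
    (σ : ℝ → ℝ)
    (hσ1 : ∀ t : ℝ, |t| ≤ δ₀ → σ₀ ≤ σ t)
    (hσ2 : ∀ t ∈ Set.Icc (-l) l, -ε ≤ σ t)
    (f f' : ℝ → ℝ)
    (hderiv : ∀ t ∈ Set.Icc (-l) l, HasDerivAt f (f' t) t)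
    (hineq : ∀ t ∈ Set.Icc (-l) l,
      2 * f' t + (n : ℝ) * (f t) ^ 2 + σ t / ((n : ℝ) - 1) ≤ 0) :
    l ≤ δ₀ + 8 * ((n : ℝ) - 1) / ((n : ℝ) * σ₀ * δ₀) := by
  have hn₁ : (0 : ℝ) < n - 1 := by linarith [show (2 : ℝ) ≤ n by exact_mod_cast hn]
  set c := σ₀ * δ₀ / (2 * (n - 1)) with hc_def
  have hc : 0 < c := by positivity
  have hriccati : ∀ t ∈ Icc (-l) l, f' t ≤ -(n / 2) * f t ^ 2 + n / 2 * c ^ 2 / 2 := by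
    intro t ht
    have hσε := div_le_div_of_nonneg_right (hσ2 t ht) hn₁.le
    rw [neg_div] at hσε
    have hεc : ε / (n - 1) ≤ n * c ^ 2 / 2 :=
      calc ε / (n - 1) ≤ n * σ₀ ^ 2 * δ₀ ^ 2 / (8 * (n - 1)) / (n - 1) :=
            div_le_div_of_nonneg_right hε hn₁.le
        _ = n * c ^ 2 / 2 := by rw [hc_def]; field_simp; ring
    linarith [hineq t ht]
  have hdrop : f δ₀ - f (-δ₀) ≤ -2 * c := by
    have hmid : Icc (-δ₀) δ₀ ⊆ Icc (-l) l := Icc_subset_Icc (by linarith) hδl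
    have := image_sub_le_mul_sub_of_hasDerivAt_le (C := -(σ₀ / (n - 1) / 2)) (by linarith)
      (fun t ht => hderiv t (hmid ht)) fun t ht => by
        have hσt := div_le_div_of_nonneg_right (hσ1 t (abs_le.2 ht)) hn₁.le
        have hsq : 0 ≤ (n : ℝ) * f t ^ 2 := by positivity
        linarith [hineq t (hmid ht)]
    convert this using 1
    rw [hc_def]; field_simp; ring
  have hk : 0 < (n : ℝ) / 2 * c ^ 2 := by positivity
  have := sub_lt_of_hasDerivAt_le_neg_mul_sq_add_of_sub_le hc (by positivity) (by linarith)
    hδ₀.le hδl hderiv hriccati hdrop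
  have hlen : c / ((n : ℝ) / 2 * c ^ 2 - n / 2 * c ^ 2 / 2) = 8 * (n - 1) / (n * σ₀ * δ₀) := by
    rw [hc_def]; field_simp; ring
  linarith

/-- Quantitative ODE lemma behind the Symmetrization Corollary: if the scalar
curvature profile σ is ≥ σ₀ near the middle and ≥ -ε globally with ε small,
then the band half-width l is bounded. -/
theorem symmetrization_corollary_ode (n : ℕ) (hn : 2 ≤ n) (σ₀ δ₀ l ε : ℝ)
    (hσ₀ : 0 < σ₀) (hδ₀ : 0 < δ₀) (hδl : δ₀ ≤ l) (hε0 : 0 ≤ ε)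
    (hε : ε ≤ (n : ℝ) * σ₀ ^ 2 * δ₀ ^ 2 / (8 * ((n : ℝ) - 1)))
    (σ : ℝ → ℝ) (hσcont : ContinuousOn σ (Set.Icc (-l) l))
    (hσ1 : ∀ t : ℝ, |t| ≤ δ₀ → σ₀ ≤ σ t)
    (hσ2 : ∀ t ∈ Set.Icc (-l) l, -ε ≤ σ t)
    (f f' : ℝ → ℝ)
    (hderiv : ∀ t ∈ Set.Icc (-l) l, HasDerivAt f (f' t) t)
    (hcont : ContinuousOn f' (Set.Icc (-l) l))
    (hineq : ∀ t ∈ Set.Icc (-l) l,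
      2 * f' t + (n : ℝ) * (f t) ^ 2 + σ t / ((n : ℝ) - 1) ≤ 0) :
    l ≤ δ₀ + 8 * ((n : ℝ) - 1) / ((n : ℝ) * σ₀ * δ₀) :=
  symmetrization_corollary_ode_general n hn σ₀ δ₀ l ε hσ₀ hδ₀ hδl hε σ hσ1 hσ2 f f' hderiv hineq
end

section
/- Define a sequence (aᵢ) of real numbers by a₁ = 1 and a_{i+1} = aᵢ/(2√2 + aᵢ). Then for all i ≥ 1: (a) aᵢ = (2√2 − 1)/((2√2)^i − 1); (b) aᵢ > (2√2 − 1)·(2√2)^{−i}; and (c) with n = 2^i, aᵢ > n^{−3/2}. -/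
lemma sqrt2_lt : (1:ℝ) < Real.sqrt 2 := by
  have := Real.sq_sqrt (by norm_num : (2:ℝ) ≥ 0)
  nlinarith [Real.sqrt_nonneg 2]

lemma s_gt_two : (2:ℝ) < 2 * Real.sqrt 2 := by nlinarith [sqrt2_lt]

lemma closed_form (a : ℕ → ℝ) (h1 : a 1 = 1)
    (hrec : ∀ i ≥ 1, a (i + 1) = a i / (2 * Real.sqrt 2 + a i)) :
    ∀ i ≥ 1, a i = (2 * Real.sqrt 2 - 1) / ((2 * Real.sqrt 2) ^ i - 1) := by
  intro i hi
  induction i with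
  | zero => omega
  | succ n ih =>
    set s := 2 * Real.sqrt 2 with hs
    have hs2 : (2:ℝ) < s := s_gt_two
    rcases eq_or_lt_of_le hi with h | h
    · rw [← h, h1, pow_one, div_self (by linarith : s - 1 ≠ 0)]
    · have hn1 : n ≥ 1 := by omega
      have hcf := ih hn1
      have hpow : (1:ℝ) < s ^ n := one_lt_pow₀ (by linarith) (by omega)
      have hpow' : (1:ℝ) < s ^ (n+1) := one_lt_pow₀ (by linarith) (by omega)
      have hd : s ^ n - 1 ≠ 0 := by linarith
      have hd' : s ^ (n+1) - 1 ≠ 0 := by linarith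
      have hapos : (0:ℝ) < (s - 1) / (s ^ n - 1) :=
        div_pos (by linarith) (by linarith)
      have hsum : s + (s - 1) / (s ^ n - 1) = (s ^ (n+1) - 1) / (s ^ n - 1) := by
        field_simp
        ring
      rw [hrec n hn1, hcf, hsum]
      field_simp

/-- The focal-radius recursion aᵢ₊₁ = aᵢ/(2√2 + aᵢ), a₁ = 1: closed form and
the lower bound aᵢ > n^{-3/2} for n = 2^i. -/
theorem focal_radius_recursion (a : ℕ → ℝ) (h1 : a 1 = 1)
    (hrec : ∀ i ≥ 1, a (i + 1) = a i / (2 * Real.sqrt 2 + a i)) :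
    ∀ i ≥ 1,
      a i = (2 * Real.sqrt 2 - 1) / ((2 * Real.sqrt 2) ^ i - 1) ∧
      (2 * Real.sqrt 2 - 1) / (2 * Real.sqrt 2) ^ i < a i ∧
      (((2 : ℝ) ^ i) ^ (-(3 : ℝ) / 2) : ℝ) < a i := by
  intro i hi
  set s := 2 * Real.sqrt 2 with hs
  have hs2 : (2:ℝ) < s := s_gt_two
  have hcf := closed_form a h1 hrec i hi
  have hpow : (1:ℝ) < s ^ i := one_lt_pow₀ (by linarith) (by omega)
  have hb : (s - 1) / s ^ i < a i := by
    rw [hcf]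
    exact div_lt_div_of_pos_left (by linarith) (by linarith) (by linarith)
  refine ⟨hcf, hb, ?_⟩
  have key : (((2 : ℝ) ^ i) ^ (-(3 : ℝ) / 2) : ℝ) = 1 / s ^ i := by
    have h2 : ((2:ℝ) ^ i) ^ (-(3 : ℝ) / 2) = (2:ℝ) ^ ((i:ℝ) * (-(3:ℝ)/2)) := by
      rw [← Real.rpow_natCast 2 i, ← Real.rpow_mul (by norm_num)]
    have hsval : s = (2:ℝ) ^ ((3:ℝ)/2) := by
      rw [hs, show (3:ℝ)/2 = 1 + 1/2 by norm_num, Real.rpow_add (by norm_num),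
        Real.rpow_one, Real.sqrt_eq_rpow]
    rw [h2, hsval, ← Real.rpow_natCast ((2:ℝ) ^ ((3:ℝ)/2)) i,
      ← Real.rpow_mul (by norm_num), one_div, ← Real.rpow_neg (by norm_num)]
    ring_nf
  rw [key]
  have : (1:ℝ) / s ^ i < (s - 1) / s ^ i :=
    div_lt_div_of_pos_right (by linarith) (by linarith)
  linarith
end

section
/- Let a, b : [0, ∞) → ℝ be continuous with a(v) < b(v) for all v, let f : [0, ∞) → ℝ be C¹ with a(v) < f′(v) < b(v) for all v, let δ > 0, and let c ∈ ℝ with a(0) < c < b(0). Then there exists a C¹ function f̄ : [0, ∞) → ℝ such that a(v) < f̄′(v) < b(v) for all v, f̄′(0) = c, and f̄(v) = f(v) for all v ≥ δ. -/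
/-!
Near `0` the new derivative interpolates linearly between `c` and `f'`; both lie in the interval
`(a v, b v)`, which is convex, so the interpolation stays admissible. This changes `∫₀^δ f'` by an
amount of order `ε`, the length of the interpolation zone, and a multiple of a fixed bump on
`[0, δ]` restores the integral. For `ε` small the bump coefficient is smaller than a uniform
margin of admissibility of `f'` and `c`, which exists by compactness of `[0, δ]`.
-/

open Set Filter Topology intervalIntegral

noncomputable section

def ramp (ε v : ℝ) : ℝ := max 0 (1 - v / ε)

def bump (δ v : ℝ) : ℝ := v * ramp δ v

/-- The coefficient of `bump δ` that makes `∫₀^δ cutoffCorrection F c δ ε` vanish. -/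
def compensator (F : ℝ → ℝ) (c δ ε : ℝ) : ℝ :=
  -(∫ x in (0 : ℝ)..δ, ramp ε x * (c - F x)) / ∫ x in (0 : ℝ)..δ, bump δ x

def cutoffCorrection (F : ℝ → ℝ) (c δ ε v : ℝ) : ℝ :=
  ramp ε v * (c - F v) + compensator F c δ ε * bump δ v

end

section RampBump

variable {ε δ v : ℝ}

@[fun_prop]
theorem continuous_ramp (ε : ℝ) : Continuous (ramp ε) := by
  unfold ramp; fun_prop

theorem ramp_zero (ε : ℝ) : ramp ε 0 = 1 := by
  simp [ramp]

theorem ramp_mem_Icc (hε : 0 ≤ ε) (hv : 0 ≤ v) : ramp ε v ∈ Icc 0 1 :=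
  ⟨le_max_left _ _, max_le zero_le_one (by linarith [div_nonneg hv hε])⟩

theorem ramp_eq_zero (hε : 0 < ε) (hv : ε ≤ v) : ramp ε v = 0 :=
  max_eq_left (by linarith [(one_le_div hε).2 hv])

theorem ramp_pos (hε : 0 < ε) (hv : v < ε) : 0 < ramp ε v :=
  lt_max_of_lt_right (by linarith [(div_lt_one hε).2 hv])

@[fun_prop]
theorem continuous_bump (δ : ℝ) : Continuous (bump δ) :=
  continuous_id.mul (continuous_ramp δ)

theorem bump_eq_zero (hδ : 0 < δ) (hv : δ ≤ v) : bump δ v = 0 := by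
  rw [bump, ramp_eq_zero hδ hv, mul_zero]

theorem bump_mem_Icc (hv : v ∈ Icc 0 δ) : bump δ v ∈ Icc 0 δ := by
  obtain ⟨h0, h1⟩ := ramp_mem_Icc (hv.1.trans hv.2) hv.1
  exact ⟨mul_nonneg hv.1 h0, (mul_le_of_le_one_right hv.1 h1).trans hv.2⟩

theorem integral_bump_pos (hδ : 0 < δ) : 0 < ∫ x in (0 : ℝ)..δ, bump δ x :=
  intervalIntegral_pos_of_pos_on ((continuous_bump δ).intervalIntegrable _ _)
    (fun _ hx => mul_pos hx.1 (ramp_pos hδ hx.2)) hδ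

end RampBump

theorem integral_eq_integral_of_eq_zero_of_le {φ : ℝ → ℝ} {a x₀ v : ℝ} (hφ : Continuous φ)
    (hzero : ∀ x, x₀ ≤ x → φ x = 0) (hv : x₀ ≤ v) :
    ∫ x in a..v, φ x = ∫ x in a..x₀, φ x := by
  have htail : ∫ x in x₀..v, φ x = 0 := by
    rw [integral_congr (g := fun _ => 0) fun x hx => hzero x (uIcc_of_le hv ▸ hx).1]
    exact integral_zero
  rw [← integral_add_adjacent_intervals (hφ.intervalIntegrable a x₀)
    (hφ.intervalIntegrable x₀ v), htail, add_zero]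

theorem IsCompact.exists_margin_of_mem_Ioo {X : Type*} [TopologicalSpace X] {s : Set X}
    (hs : IsCompact s) {p q φ : X → ℝ} (hp : ContinuousOn p s) (hq : ContinuousOn q s)
    (hφ : ContinuousOn φ s) (h : ∀ x ∈ s, φ x ∈ Ioo (p x) (q x)) :
    ∃ μ > 0, ∀ x ∈ s, φ x ∈ Icc (p x + μ) (q x - μ) := by
  obtain ⟨μ, hμ, hle⟩ := hs.exists_forall_le' ((hφ.sub hp).inf (hq.sub hφ)) (a := 0)
    fun x hx => lt_min (sub_pos.2 (h x hx).1) (sub_pos.2 (h x hx).2)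
  refine ⟨μ, hμ, fun x hx => ?_⟩
  obtain ⟨hlo, hhi⟩ : μ ≤ φ x - p x ∧ μ ≤ q x - φ x := le_min_iff.1 (hle x hx)
  exact ⟨by linarith, by linarith⟩

theorem exists_margin_near_zero {a b F : ℝ → ℝ} {c δ : ℝ} (ha : ContinuousOn a (Ici 0))
    (hb : ContinuousOn b (Ici 0)) (hF : ContinuousOn F (Ici 0))
    (hFab : ∀ v, 0 ≤ v → F v ∈ Ioo (a v) (b v)) (hc : c ∈ Ioo (a 0) (b 0)) (hδ : 0 < δ) :
    ∃ μ > 0, ∃ r > 0, r ≤ δ ∧ (∀ v ∈ Icc 0 δ, F v ∈ Icc (a v + μ) (b v - μ)) ∧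
      ∀ v ∈ Icc 0 r, c ∈ Icc (a v + μ) (b v - μ) := by
  have hnear : ∀ᶠ v in 𝓝[≥] 0, c ∈ Ioo (a v) (b v) :=
    ((ha 0 self_mem_Ici).eventually_lt continuousWithinAt_const hc.1).and
      (continuousWithinAt_const.eventually_lt (hb 0 self_mem_Ici) hc.2)
  obtain ⟨r, hr, hrc⟩ := mem_nhdsGE_iff_exists_Icc_subset.1 hnear
  obtain ⟨μ₁, hμ₁, hFμ⟩ := isCompact_Icc.exists_margin_of_mem_Ioo (ha.mono Icc_subset_Ici_self)
    (hb.mono Icc_subset_Ici_self) (hF.mono Icc_subset_Ici_self) fun v hv => hFab v hv.1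
  obtain ⟨μ₂, hμ₂, hcμ⟩ := isCompact_Icc.exists_margin_of_mem_Ioo (ha.mono Icc_subset_Ici_self)
    (hb.mono Icc_subset_Ici_self) continuousOn_const
    fun v (hv : v ∈ Icc 0 (min r δ)) => hrc ⟨hv.1, hv.2.trans (min_le_left _ _)⟩
  have hshrink : ∀ {x p q μ μ' : ℝ}, μ' ≤ μ → x ∈ Icc (p + μ) (q - μ) →
      x ∈ Icc (p + μ') (q - μ') := fun hle hx => Icc_subset_Icc (by linarith) (by linarith) hx
  exact ⟨min μ₁ μ₂, lt_min hμ₁ hμ₂, min r δ, lt_min hr hδ, min_le_right _ _,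
    fun v hv => hshrink (min_le_left _ _) (hFμ v hv),
    fun v hv => hshrink (min_le_right _ _) (hcμ v hv)⟩

section CutoffCorrection

variable {F : ℝ → ℝ} {c δ ε v : ℝ}

theorem continuous_cutoffCorrection (hF : Continuous F) :
    Continuous (cutoffCorrection F c δ ε) :=
  ((continuous_ramp ε).mul (continuous_const.sub hF)).add
    (continuous_const.mul (continuous_bump δ))

theorem cutoffCorrection_zero : cutoffCorrection F c δ ε 0 = c - F 0 := by
  simp [cutoffCorrection, ramp_zero, bump]

theorem cutoffCorrection_eq_zero (hε : 0 < ε) (hεδ : ε ≤ δ) (hv : δ ≤ v) :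
    cutoffCorrection F c δ ε v = 0 := by
  rw [cutoffCorrection, ramp_eq_zero hε (hεδ.trans hv), bump_eq_zero (hε.trans_le hεδ) hv]
  ring

theorem integral_cutoffCorrection (hF : Continuous F) (hε : 0 < ε) (hεδ : ε ≤ δ) (hv : δ ≤ v) :
    ∫ x in (0 : ℝ)..v, cutoffCorrection F c δ ε x = 0 := by
  have hI := integral_bump_pos (hε.trans_le hεδ)
  rw [integral_eq_integral_of_eq_zero_of_le (continuous_cutoffCorrection hF)
    (fun x hx => cutoffCorrection_eq_zero hε hεδ hx) hv]
  simp only [cutoffCorrection]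
  rw [integral_add ((by fun_prop : Continuous fun x => ramp ε x * (c - F x)).intervalIntegrable _ _)
    ((by fun_prop : Continuous fun x => compensator F c δ ε * bump δ x).intervalIntegrable _ _),
    integral_const_mul, compensator]
  field_simp
  ring

theorem tendsto_compensator (hF : Continuous F) (hδ : 0 < δ) :
    Tendsto (compensator F c δ) (𝓝[>] 0) (𝓝 0) := by
  obtain ⟨M, hM⟩ := isCompact_Icc.exists_bound_of_continuousOn
    ((continuous_const.sub hF).continuousOn (s := Icc 0 δ))
  have hmass : ∀ ε ∈ Ioc 0 δ, ‖∫ x in (0 : ℝ)..δ, ramp ε x * (c - F x)‖ ≤ M * ε := by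
    intro ε hε
    rw [integral_eq_integral_of_eq_zero_of_le (by fun_prop)
      (fun x hx => by rw [ramp_eq_zero hε.1 hx, zero_mul]) hε.2]
    refine (norm_integral_le_of_norm_le_const fun x hx => ?_).trans_eq
      (by rw [sub_zero, abs_of_pos hε.1])
    rw [uIoc_of_le hε.1.le] at hx
    obtain ⟨h0, h1⟩ := ramp_mem_Icc hε.1.le hx.1.le
    rw [norm_mul, Real.norm_of_nonneg h0]
    exact (mul_le_of_le_one_left (norm_nonneg _) h1).trans (hM x ⟨hx.1.le, hx.2.trans hε.2⟩)
  have hmass_lim : Tendsto (fun ε => ∫ x in (0 : ℝ)..δ, ramp ε x * (c - F x)) (𝓝[>] 0) (𝓝 0) := by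
    refine squeeze_zero_norm' (eventually_of_mem (Ioc_mem_nhdsGT hδ) hmass) ?_
    exact tendsto_nhdsWithin_of_tendsto_nhds (by simpa using (continuous_const_mul M).tendsto 0)
  unfold compensator
  simpa using hmass_lim.neg.div_const (∫ x in (0 : ℝ)..δ, bump δ x)

theorem add_cutoffCorrection_mem_Ioo {a b : ℝ → ℝ} {μ : ℝ}
    (hF : ∀ v ∈ Icc 0 δ, F v ∈ Icc (a v + μ) (b v - μ))
    (hc : ∀ v ∈ Icc 0 ε, c ∈ Icc (a v + μ) (b v - μ)) (hε : 0 < ε)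
    (hβ : |compensator F c δ ε| * δ < μ) (hv : v ∈ Icc 0 δ) :
    F v + cutoffCorrection F c δ ε v ∈ Ioo (a v) (b v) := by
  have hinterp : F v + ramp ε v * (c - F v) ∈ Icc (a v + μ) (b v - μ) := by
    rcases le_or_gt v ε with hvε | hvε
    · exact (convex_Icc _ _).add_smul_sub_mem (hF v hv) (hc v ⟨hv.1, hvε⟩)
        (ramp_mem_Icc hε.le hv.1)
    · simpa [ramp_eq_zero hε hvε.le] using hF v hv
  have hsmall : |compensator F c δ ε * bump δ v| < μ := by
    obtain ⟨h0, h1⟩ := bump_mem_Icc hv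
    rw [abs_mul, abs_of_nonneg h0]
    exact (mul_le_mul_of_nonneg_left h1 (abs_nonneg _)).trans_lt hβ
  rw [cutoffCorrection, ← add_assoc]
  obtain ⟨hlo, hhi⟩ := abs_lt.1 hsmall
  exact ⟨by linarith [hinterp.1], by linarith [hinterp.2]⟩

end CutoffCorrection

theorem cutoff_homotopy_one_dimensional_general
    (a b : ℝ → ℝ) (ha : ContinuousOn a (Set.Ici (0 : ℝ)))
    (hb : ContinuousOn b (Set.Ici (0 : ℝ)))
    (f f' : ℝ → ℝ)
    (hderiv : ∀ v : ℝ, 0 ≤ v → HasDerivAt f (f' v) v)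
    (hcont : ContinuousOn f' (Set.Ici (0 : ℝ)))
    (hf : ∀ v : ℝ, 0 ≤ v → a v < f' v ∧ f' v < b v)
    (δ : ℝ) (hδ : 0 < δ) (c : ℝ) (hc : a 0 < c ∧ c < b 0) :
    ∃ g g' : ℝ → ℝ,
      (∀ v : ℝ, 0 ≤ v → HasDerivAt g (g' v) v) ∧
      ContinuousOn g' (Set.Ici (0 : ℝ)) ∧
      (∀ v : ℝ, 0 ≤ v → a v < g' v ∧ g' v < b v) ∧
      g' 0 = c ∧
      (∀ v : ℝ, δ ≤ v → g v = f v) := by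
  -- `u ↦ ∫₀^u h` is differentiable at `0` only if `h` is continuous there from both sides.
  set F : ℝ → ℝ := fun v => f' (max v 0)
  have hFc : Continuous F := hcont.comp_continuous (by fun_prop) fun v => le_max_right v 0
  have hFf : ∀ v, 0 ≤ v → F v = f' v := fun v hv => congrArg f' (max_eq_left hv)
  obtain ⟨μ, hμ, r, hr, hrδ, hFμ, hcμ⟩ := exists_margin_near_zero ha hb hcont hf hc hδ
  obtain ⟨ε, ⟨hε, hεr⟩, hβ⟩ := (Filter.Eventually.and (Ioc_mem_nhdsGT hr)
    ((tendsto_compensator (c := c) hFc hδ).abs.eventually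
      (gt_mem_nhds (by simpa using div_pos hμ hδ)))).exists
  have hεδ : ε ≤ δ := hεr.trans hrδ
  have hhc : Continuous (cutoffCorrection F c δ ε) := continuous_cutoffCorrection hFc
  refine ⟨fun v => f v + ∫ x in (0 : ℝ)..v, cutoffCorrection F c δ ε x,
    fun v => f' v + cutoffCorrection F c δ ε v,
    fun v hv => (hderiv v hv).add (hhc.integral_hasStrictDerivAt 0 v).hasDerivAt,
    hcont.add hhc.continuousOn, fun v hv => ?_, ?_, fun v hv => ?_⟩
  · dsimp only
    rcases le_or_gt v δ with hvδ | hvδ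
    · rw [← hFf v hv]
      exact add_cutoffCorrection_mem_Ioo (fun v hv => hFf v hv.1 ▸ hFμ v hv)
        (fun v hv => hcμ v ⟨hv.1, hv.2.trans hεr⟩) hε ((lt_div_iff₀ hδ).1 hβ) ⟨hv, hvδ⟩
    · rw [cutoffCorrection_eq_zero hε hεδ hvδ.le, add_zero]
      exact hf v hv
  · dsimp only
    rw [cutoffCorrection_zero, hFf 0 le_rfl, add_sub_cancel]
  · dsimp only
    rw [integral_cutoffCorrection hFc hε hεδ hv, add_zero]

/-- One-dimensional Cut-off Homotopy Lemma: a solution of the open differential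
inequality a < f' < b can be modified near 0 to achieve any admissible
derivative at 0, agreeing with f for v ≥ δ. -/
theorem cutoff_homotopy_one_dimensional
    (a b : ℝ → ℝ) (ha : ContinuousOn a (Set.Ici (0 : ℝ)))
    (hb : ContinuousOn b (Set.Ici (0 : ℝ)))
    (hab : ∀ v : ℝ, 0 ≤ v → a v < b v)
    (f f' : ℝ → ℝ)
    (hderiv : ∀ v : ℝ, 0 ≤ v → HasDerivAt f (f' v) v)
    (hcont : ContinuousOn f' (Set.Ici (0 : ℝ)))
    (hf : ∀ v : ℝ, 0 ≤ v → a v < f' v ∧ f' v < b v)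
    (δ : ℝ) (hδ : 0 < δ) (c : ℝ) (hc : a 0 < c ∧ c < b 0) :
    ∃ g g' : ℝ → ℝ,
      (∀ v : ℝ, 0 ≤ v → HasDerivAt g (g' v) v) ∧
      ContinuousOn g' (Set.Ici (0 : ℝ)) ∧
      (∀ v : ℝ, 0 ≤ v → a v < g' v ∧ g' v < b v) ∧
      g' 0 = c ∧
      (∀ v : ℝ, δ ≤ v → g v = f v) :=
  cutoff_homotopy_one_dimensional_general a b ha hb f f' hderiv hcont hf δ hδ c hc
end
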